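/- Let P₁ and P∞ be mutually absolutely continuous probability measures on (Ω, F). Let Ω_μ̄ ⊆ Ω_μ̲ be measurable sets with 0 < P∞(Ω_μ̄), 0 < P∞(Ω_μ̲), and P₁(Ω_μ̄)/P∞(Ω_μ̄) ≥ P₁(Ω_μ̲)/P∞(Ω_μ̲). Define for any censoring region A the post-censoring K-L divergence D(A) := ∫_{Ω\A} ln(dP₁/dP∞) dP₁ + P₁(A) ln(P₁(A)/P∞(A)). Then D(Ω_μ̄) ≥ D(Ω_μ̲), provided D(P₁||P∞) < ∞. -/

import Mathlib

/-!
Write `S = A \ B`, so that `Bᶜ = Aᶜ ∪ S` and `A = B ∪ S`. Then `D(B) - D(A)` is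
`∫_S ℓ dP₁ + P₁(B) log (P₁(B)/P∞(B)) - P₁(A) log (P₁(A)/P∞(A))`. Gibbs' inequality on `S`
(nonnegativity of the K-L divergence of the restrictions to `S`) bounds `∫_S ℓ dP₁` below by
`P₁(S) log (P₁(S)/P∞(S))`, and the two-term log-sum inequality (convexity of `x ↦ x log x`) says
that merging the cells `B` and `S` into `A` cannot increase `∑ P₁ log (P₁/P∞)`.
-/

open MeasureTheory Real

theorem Real.add_mul_log_div_add_le {a b c d : ℝ} (ha : 0 ≤ a) (hb : 0 < b) (hc : 0 ≤ c)
    (hd : 0 < d) :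
    (a + c) * log ((a + c) / (b + d)) ≤ a * log (a / b) + c * log (c / d) := by
  have hbd : 0 < b + d := by positivity
  have hconvex := convexOn_mul_log.2 (Set.mem_Ici.2 (by positivity : 0 ≤ a / b))
    (Set.mem_Ici.2 (by positivity : 0 ≤ c / d)) (by positivity : 0 ≤ b / (b + d))
    (by positivity : 0 ≤ d / (b + d)) (by field_simp)
  have hmean : (b / (b + d)) • (a / b) + (d / (b + d)) • (c / d) = (a + c) / (b + d) := by
    simp only [smul_eq_mul]; field_simp
  rw [hmean, smul_eq_mul, smul_eq_mul] at hconvex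
  calc (a + c) * log ((a + c) / (b + d))
      = (b + d) * ((a + c) / (b + d) * log ((a + c) / (b + d))) := by field_simp
    _ ≤ (b + d) * (b / (b + d) * (a / b * log (a / b)) + d / (b + d) * (c / d * log (c / d))) :=
        mul_le_mul_of_nonneg_left hconvex hbd.le
    _ = a * log (a / b) + c * log (c / d) := by field_simp

namespace MeasureTheory

variable {α : Type*} [MeasurableSpace α] {μ ν : Measure α} {s t : Set α}

theorem Measure.AbsolutelyContinuous.measureReal_eq_zero [IsFiniteMeasure μ] [IsFiniteMeasure ν]
    (hμν : μ ≪ ν) (hs : ν.real s = 0) :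
    μ.real s = 0 := by
  rw [measureReal_eq_zero_iff] at hs ⊢
  exact hμν hs

theorem mul_log_div_union_le [IsFiniteMeasure μ] [IsFiniteMeasure ν] (hμν : μ ≪ ν)
    (hst : Disjoint s t) (ht : MeasurableSet t) :
    μ.real (s ∪ t) * log (μ.real (s ∪ t) / ν.real (s ∪ t))
      ≤ μ.real s * log (μ.real s / ν.real s) + μ.real t * log (μ.real t / ν.real t) := by
  rw [measureReal_union hst ht, measureReal_union hst ht]
  by_cases hs : ν.real s = 0
  · rw [hs, hμν.measureReal_eq_zero hs]
    simp
  by_cases ht : ν.real t = 0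
  · rw [ht, hμν.measureReal_eq_zero ht]
    simp
  exact Real.add_mul_log_div_add_le measureReal_nonneg (lt_of_le_of_ne' measureReal_nonneg hs)
    measureReal_nonneg (lt_of_le_of_ne' measureReal_nonneg ht)

theorem Measure.rnDeriv_restrict_restrict_of_ac [SigmaFinite ν] [μ.HaveLebesgueDecomposition ν]
    (hμν : μ ≪ ν) (hs : MeasurableSet s) :
    (μ.restrict s).rnDeriv (ν.restrict s) =ᵐ[ν.restrict s] μ.rnDeriv ν := by
  conv_lhs => rw [← Measure.withDensity_rnDeriv_eq μ ν hμν, restrict_withDensity hs]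
  exact Measure.rnDeriv_withDensity _ (Measure.measurable_rnDeriv μ ν)

theorem llr_restrict_restrict_of_ac [SigmaFinite ν] [μ.HaveLebesgueDecomposition ν]
    (hμν : μ ≪ ν) (hs : MeasurableSet s) :
    llr (μ.restrict s) (ν.restrict s) =ᵐ[μ.restrict s] llr μ ν :=
  ((hμν.restrict s).ae_eq (Measure.rnDeriv_restrict_restrict_of_ac hμν hs)).fun_comp
    fun r ↦ log r.toReal

theorem mul_log_div_le_setIntegral_llr [IsFiniteMeasure μ] [IsFiniteMeasure ν] (hμν : μ ≪ ν)
    (hint : IntegrableOn (llr μ ν) s μ) (hs : MeasurableSet s) :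
    μ.real s * log (μ.real s / ν.real s) ≤ ∫ x in s, llr μ ν x ∂μ := by
  have hllr := llr_restrict_restrict_of_ac hμν hs
  have hint' : Integrable (llr (μ.restrict s) (ν.restrict s)) (μ.restrict s) :=
    hint.congr hllr.symm
  have h := InformationTheory.mul_log_le_toReal_klDiv (hμν.restrict s) hint'
  rw [InformationTheory.toReal_klDiv (hμν.restrict s) hint', integral_congr_ae hllr] at h
  simp only [measureReal_restrict_apply_univ] at h
  linarith

end MeasureTheory

theorem stmt_7_general {Ω : Type*} [MeasurableSpace Ω]
    (P₁ Pinf : Measure Ω) [IsProbabilityMeasure P₁] [IsProbabilityMeasure Pinf]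
    (h₁ : P₁ ≪ Pinf)
    (hint : Integrable (llr P₁ Pinf) P₁)
    (A B : Set Ω) (hA : MeasurableSet A) (hB : MeasurableSet B) (hBA : B ⊆ A) :
    (∫ ω in Aᶜ, llr P₁ Pinf ω ∂P₁) +
        (P₁ A).toReal * Real.log ((P₁ A).toReal / (Pinf A).toReal)
      ≤ (∫ ω in Bᶜ, llr P₁ Pinf ω ∂P₁) +
        (P₁ B).toReal * Real.log ((P₁ B).toReal / (Pinf B).toReal) := by
  have hS : MeasurableSet (A \ B) := hA.diff hB
  have hBc : Bᶜ = Aᶜ ∪ A \ B := by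
    ext x
    have := @hBA x
    simp only [Set.mem_compl_iff, Set.mem_union, Set.mem_sdiff]
    tauto
  rw [hBc, setIntegral_union (disjoint_compl_left.mono_right Set.sdiff_subset) hS
    hint.integrableOn hint.integrableOn]
  have hgibbs := mul_log_div_le_setIntegral_llr h₁ hint.integrableOn hS
  have hlogsum := mul_log_div_union_le h₁ (s := B) disjoint_sdiff_self_right hS
  rw [Set.union_sdiff_cancel hBA] at hlogsum
  simp only [measureReal_def] at hgibbs hlogsum
  linarith

/-- Shrinking the no-send region to a subset with larger (or equal) average likelihood
ratio does not decrease the post-censoring K-L divergence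
`D(A) = ∫_{Ω\A} ln(dP₁/dP∞) dP₁ + P₁(A) ln(P₁(A)/P∞(A))`. -/
theorem stmt_7 {Ω : Type*} [MeasurableSpace Ω]
    (P₁ Pinf : Measure Ω) [IsProbabilityMeasure P₁] [IsProbabilityMeasure Pinf]
    (h₁ : P₁ ≪ Pinf) (h₂ : Pinf ≪ P₁)
    (hint : Integrable (llr P₁ Pinf) P₁)
    (A B : Set Ω) (hA : MeasurableSet A) (hB : MeasurableSet B) (hBA : B ⊆ A)
    (hApos : 0 < Pinf A) (hBpos : 0 < Pinf B)
    (hratio : P₁ A / Pinf A ≤ P₁ B / Pinf B) :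
    (∫ ω in Aᶜ, llr P₁ Pinf ω ∂P₁) +
        (P₁ A).toReal * Real.log ((P₁ A).toReal / (Pinf A).toReal)
      ≤ (∫ ω in Bᶜ, llr P₁ Pinf ω ∂P₁) +
        (P₁ B).toReal * Real.log ((P₁ B).toReal / (Pinf B).toReal) :=
  stmt_7_general P₁ Pinf h₁ hint A B hA hB hBA
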